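/- Bisimulation Lemma (X-property): for π-processes P and Q, if P ⟹ P' for some P' with P' = Q, and Q ⟹ Q' for some Q' with Q' = P, then P = Q. -/

import Mathlib

set_option linter.unusedVariables false

/-! Core formalization of the π-calculus with name dichotomy.
Names are natural numbers; name variables are natural numbers (kept disjoint
via the sum-like type `NV`). -/

abbrev Name := ℕ

/-- Names and name variables. -/
inductive NV : Type
  | nm : Name → NV
  | vr : ℕ → NV
  deriving DecidableEq

/-- π-terms.  Input and output choices have a finite index set `Fin k`. -/
inductive Term : Type
  | nil : Term
  | inp : NV → ℕ → (k : ℕ) → (Fin k → Term) → Term          -- Σ_{i∈I} n(x).T_i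
  | out : NV → (k : ℕ) → (Fin k → NV) → (Fin k → Term) → Term -- Σ_{i∈I} n̄ m_i.T_i
  | par : Term → Term → Term
  | res : Name → Term → Term
  | mat : NV → NV → Term → Term
  | mis : NV → NV → Term → Term
  | repInp : NV → ℕ → Term → Term                             -- !n(x).T
  | repOut : NV → NV → Term → Term                            -- !n̄m.T

namespace NV

/-- Apply a map on variables. -/
def sub (σ : ℕ → NV) : NV → NV
  | nm a => nm a
  | vr x => σ x

/-- Apply a map on names. -/
def ren (α : Name → Name) : NV → NV
  | nm a => nm (α a)
  | vr x => vr x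

def vars : NV → Set ℕ
  | nm _ => ∅
  | vr x => {x}

def names : NV → Set Name
  | nm a => {a}
  | vr _ => ∅

end NV

namespace Term

/-- Apply a substitution (a map from name variables to names-or-variables),
    not substituting bound occurrences. -/
def applyVar (σ : ℕ → NV) : Term → Term
  | nil => nil
  | inp n x k Ts => inp (n.sub σ) x k (fun i => (Ts i).applyVar (Function.update σ x (NV.vr x)))
  | out n k ms Ts => out (n.sub σ) k (fun i => (ms i).sub σ) (fun i => (Ts i).applyVar σ)
  | par S T => par (S.applyVar σ) (T.applyVar σ)
  | res c T => res c (T.applyVar σ)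
  | mat p q T => mat (p.sub σ) (q.sub σ) (T.applyVar σ)
  | mis p q T => mis (p.sub σ) (q.sub σ) (T.applyVar σ)
  | repInp n x T => repInp (n.sub σ) x (T.applyVar (Function.update σ x (NV.vr x)))
  | repOut n m T => repOut (n.sub σ) (m.sub σ) (T.applyVar σ)

/-- Substitute the single name `c` for the name variable `x`: `T{c/x}`. -/
def subst1 (x : ℕ) (c : Name) (T : Term) : Term :=
  T.applyVar (fun y => if y = x then NV.nm c else NV.vr y)

/-- Apply an assignment (a total map from name variables to names). -/
def assign (ρ : ℕ → Name) (T : Term) : Term :=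
  T.applyVar (fun x => NV.nm (ρ x))

/-- Apply a renaming to all names of a term. -/
def applyName (α : Name → Name) : Term → Term
  | nil => nil
  | inp n x k Ts => inp (n.ren α) x k (fun i => (Ts i).applyName α)
  | out n k ms Ts => out (n.ren α) k (fun i => (ms i).ren α) (fun i => (Ts i).applyName α)
  | par S T => par (S.applyName α) (T.applyName α)
  | res c T => res (α c) (T.applyName α)
  | mat p q T => mat (p.ren α) (q.ren α) (T.applyName α)
  | mis p q T => mis (p.ren α) (q.ren α) (T.applyName α)
  | repInp n x T => repInp (n.ren α) x (T.applyName α)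
  | repOut n m T => repOut (n.ren α) (m.ren α) (T.applyName α)

/-- Free name variables. -/
def fvar : Term → Set ℕ
  | nil => ∅
  | inp n x k Ts => n.vars ∪ ((⋃ i, (Ts i).fvar) \ {x})
  | out n k ms Ts => n.vars ∪ (⋃ i, (ms i).vars ∪ (Ts i).fvar)
  | par S T => S.fvar ∪ T.fvar
  | res _ T => T.fvar
  | mat p q T => p.vars ∪ q.vars ∪ T.fvar
  | mis p q T => p.vars ∪ q.vars ∪ T.fvar
  | repInp n x T => n.vars ∪ (T.fvar \ {x})
  | repOut n m T => n.vars ∪ m.vars ∪ T.fvar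

/-- Global (non-local) names. -/
def gname : Term → Set Name
  | nil => ∅
  | inp n _ k Ts => n.names ∪ (⋃ i, (Ts i).gname)
  | out n k ms Ts => n.names ∪ (⋃ i, (ms i).names ∪ (Ts i).gname)
  | par S T => S.gname ∪ T.gname
  | res c T => T.gname \ {c}
  | mat p q T => p.names ∪ q.names ∪ T.gname
  | mis p q T => p.names ∪ q.names ∪ T.gname
  | repInp n _ T => n.names ∪ T.gname
  | repOut n m T => n.names ∪ m.names ∪ T.gname

end Term

/-- A π-process is a closed π-term. -/
def Closed (P : Term) : Prop := P.fvar = ∅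

def IsProc (P : Term) : Prop := Closed P

/-- Labels (external actions). -/
inductive Label : Type
  | inp : Name → Name → Label      -- ab
  | out : Name → Name → Label      -- āb
  | bout : Name → Name → Label     -- ā(c)
  deriving DecidableEq

def Label.names : Label → Set Name
  | .inp a b => {a, b}
  | .out a b => {a, b}
  | .bout a c => {a, c}

def Label.ren (α : Name → Name) : Label → Label
  | .inp a b => .inp (α a) (α b)
  | .out a b => .out (α a) (α b)
  | .bout a c => .bout (α a) (α c)

/-- Actions: internal action τ or a label. -/
inductive Act : Type
  | tau : Act
  | lab : Label → Act

def Act.names : Act → Set Name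
  | .tau => ∅
  | .lab ℓ => ℓ.names

def Act.ren (α : Name → Name) : Act → Act
  | .tau => .tau
  | .lab ℓ => .lab (ℓ.ren α)

/-- The labelled transition system of the π-calculus. -/
inductive Step : Term → Act → Term → Prop
  | inp {a : Name} {x : ℕ} {k : ℕ} {Ts : Fin k → Term} (i : Fin k) (c : Name) :
      Step (.inp (.nm a) x k Ts) (.lab (.inp a c)) ((Ts i).subst1 x c)
  | out {a : Name} {k : ℕ} {ms : Fin k → NV} {Ts : Fin k → Term} (i : Fin k) {c : Name}
      (h : ms i = .nm c) :
      Step (.out (.nm a) k ms Ts) (.lab (.out a c)) (Ts i)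
  | parR {S T T' : Term} {μ : Act} :
      Step T μ T' → Step (.par S T) μ (.par S T')
  | parL {S S' T : Term} {μ : Act} :
      Step S μ S' → Step (.par S T) μ (.par S' T)
  | commL {S S' T T' : Term} {a b : Name} :
      Step S (.lab (.inp a b)) S' → Step T (.lab (.out a b)) T' →
      Step (.par S T) .tau (.par S' T')
  | commR {S S' T T' : Term} {a b : Name} :
      Step S (.lab (.out a b)) S' → Step T (.lab (.inp a b)) T' →
      Step (.par S T) .tau (.par S' T')
  | closeL {S S' T T' : Term} {a c : Name} :
      Step S (.lab (.inp a c)) S' → Step T (.lab (.bout a c)) T' →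
      Step (.par S T) .tau (.res c (.par S' T'))
  | closeR {S S' T T' : Term} {a c : Name} :
      Step S (.lab (.bout a c)) S' → Step T (.lab (.inp a c)) T' →
      Step (.par S T) .tau (.res c (.par S' T'))
  | open_ {T T' : Term} {a c : Name} :
      Step T (.lab (.out a c)) T' → Step (.res c T) (.lab (.bout a c)) T'
  | resStep {T T' : Term} {μ : Act} {c : Name} :
      Step T μ T' → c ∉ μ.names → Step (.res c T) μ (.res c T')
  | matStep {T T' : Term} {μ : Act} {a : Name} :
      Step T μ T' → Step (.mat (.nm a) (.nm a) T) μ T'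
  | misStep {T T' : Term} {μ : Act} {a b : Name} :
      a ≠ b → Step T μ T' → Step (.mis (.nm a) (.nm b) T) μ T'
  | repOutStep {a b : Name} {T : Term} :
      Step (.repOut (.nm a) (.nm b) T) (.lab (.out a b)) (.par T (.repOut (.nm a) (.nm b) T))
  | repInpStep {a : Name} {x : ℕ} {T : Term} (b : Name) :
      Step (.repInp (.nm a) x T) (.lab (.inp a b)) (.par (T.subst1 x b) (.repInp (.nm a) x T))

/-- Internal action. -/
def Tau (P Q : Term) : Prop := Step P .tau Q

/-- `P ⟹ Q` : reflexive and transitive closure of τ. -/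
def WeakTau : Term → Term → Prop := Relation.ReflTransGen Tau

/-- `P ⇓` : observability. -/
def Obs (P : Term) : Prop := ∃ P' ℓ P'', WeakTau P P' ∧ Step P' (.lab ℓ) P''

abbrev PRel : Type := Term → Term → Prop

def OnProc (R : PRel) : Prop := ∀ P Q, R P Q → IsProc P ∧ IsProc Q

def ReflProc (R : PRel) : Prop := ∀ P, IsProc P → R P P

def Equipollent (R : PRel) : Prop := ∀ P Q, R P Q → (Obs P ↔ Obs Q)

def Extensional (R : PRel) : Prop :=
  (∀ L M P Q, R L M → R P Q → R (.par L P) (.par M Q)) ∧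
  (∀ P Q c, R P Q → R (.res c P) (.res c Q))

/-- An infinite τ-sequence. -/
def TauSeq (f : ℕ → Term) : Prop := ∀ n, Tau (f n) (f (n + 1))

/-- `P —τ→⟹ P'`. -/
def TauWeak (P P' : Term) : Prop := ∃ P₀, Tau P P₀ ∧ WeakTau P₀ P'

def Codivergent (R : PRel) : Prop := ∀ P Q, R P Q →
  ((∀ f : ℕ → Term, f 0 = Q → TauSeq f →
      ∃ k, 1 ≤ k ∧ ∃ P', TauWeak P P' ∧ R P' (f k)) ∧
   (∀ f : ℕ → Term, f 0 = P → TauSeq f →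
      ∃ k, 1 ≤ k ∧ ∃ Q', TauWeak Q Q' ∧ R Q' (f k)))

/-- Branching-style bisimulation. -/
def Bisim (R : PRel) : Prop := ∀ P Q, R P Q →
  ((∀ Q', Tau Q Q' →
      (∃ P', WeakTau P P' ∧ R P' Q ∧ R P' Q') ∨
      (∃ P'' P', WeakTau P P'' ∧ R P'' Q ∧ Tau P'' P' ∧ R P' Q')) ∧
   (∀ P', Tau P P' →
      (∃ Q', WeakTau Q Q' ∧ R P Q' ∧ R P' Q') ∨
      (∃ Q'' Q', WeakTau Q Q'' ∧ R P Q'' ∧ Tau Q'' Q' ∧ R P' Q')))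

/-- A relation qualifying for the absolute equality. -/
def GoodAbs (R : PRel) : Prop :=
  OnProc R ∧ ReflProc R ∧ Equipollent R ∧ Extensional R ∧ Codivergent R ∧ Bisim R

/-- The absolute equality: the largest reflexive, equipollent, extensional,
codivergent bisimulation on π-processes. -/
def AbsEq (P Q : Term) : Prop := ∃ R : PRel, GoodAbs R ∧ R P Q

/-! Every good relation is contained in `AbsEq`, so it suffices to find a good relation
containing `(P, Q)`.

The equivalence closure `AbsChain` of `AbsEq` is good. The only delicate clause is
codivergence: a divergence of one end of a chain of `AbsEq`-links is transported link by link to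
the other end, codivergence of each link supplying progress and its bisimilarity following the
internal moves.

For a good symmetric relation `≈`, the X-relation `XRel ≈ = {(A, B) | A ⟹ A' ≈ B, B ⟹ B' ≈ A}`
is again good: each clause is checked at `(A', B)` after performing `A ⟹ A'` first. It contains
`(P, Q)` for `≈ = AbsChain`. -/

open Relation

namespace NV

lemma vars_sub_subset {σ : ℕ → NV} {n : NV} {V : Set ℕ} (h : n.vars ⊆ {y | (σ y).vars ⊆ V}) :
    (n.sub σ).vars ⊆ V := by
  cases n with
  | nm a => simp [NV.sub, NV.vars]
  | vr x => exact h (by simp [NV.vars])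

end NV

namespace Term

lemma vars_update_subset {σ : ℕ → NV} {x : ℕ} {V : Set ℕ} :
    {x} ∪ {y | (σ y).vars ⊆ V} ⊆ {y | (Function.update σ x (.vr x) y).vars ⊆ {x} ∪ V} := by
  rintro y (rfl | hy)
  · simp [NV.vars]
  · by_cases hyx : y = x
    · simp [hyx, NV.vars]
    · show (Function.update σ x (.vr x) y).vars ⊆ {x} ∪ V
      rw [Function.update_of_ne hyx]
      exact hy.trans Set.subset_union_right

lemma fvar_applyVar_subset (T : Term) {σ : ℕ → NV} {V : Set ℕ}
    (h : T.fvar ⊆ {y | (σ y).vars ⊆ V}) : (T.applyVar σ).fvar ⊆ V := by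
  induction T generalizing σ V with
  | nil => simp [applyVar, fvar]
  | inp n x k Ts ih =>
    simp only [applyVar, fvar, Set.union_subset_iff, Set.sdiff_subset_iff,
      Set.iUnion_subset_iff] at h ⊢
    exact ⟨NV.vars_sub_subset h.1, fun i => ih i ((h.2 i).trans vars_update_subset)⟩
  | out n k ms Ts ih =>
    simp only [applyVar, fvar, Set.union_subset_iff, Set.iUnion_subset_iff] at h ⊢
    exact ⟨NV.vars_sub_subset h.1, fun i => ⟨NV.vars_sub_subset (h.2 i).1, ih i (h.2 i).2⟩⟩
  | par S T ihS ihT =>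
    simp only [applyVar, fvar, Set.union_subset_iff] at h ⊢
    exact ⟨ihS h.1, ihT h.2⟩
  | res c T ih => exact ih h
  | mat p q T ih | mis p q T ih | repOut p q T ih =>
    simp only [applyVar, fvar, Set.union_subset_iff] at h ⊢
    exact ⟨⟨NV.vars_sub_subset h.1.1, NV.vars_sub_subset h.1.2⟩, ih h.2⟩
  | repInp n x T ih =>
    simp only [applyVar, fvar, Set.union_subset_iff, Set.sdiff_subset_iff] at h ⊢
    exact ⟨NV.vars_sub_subset h.1, ih (h.2.trans vars_update_subset)⟩

lemma fvar_subst1_subset (T : Term) (x : ℕ) (c : Name) : (T.subst1 x c).fvar ⊆ T.fvar \ {x} := by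
  refine T.fvar_applyVar_subset fun y hy => ?_
  by_cases hyx : y = x
  · simp [hyx, NV.vars]
  · simpa [hyx, NV.vars] using hy

end Term

lemma Step.fvar_subset {T T' : Term} {μ : Act} (h : Step T μ T') : T'.fvar ⊆ T.fvar := by
  induction h with
  | @inp a x k Ts i c =>
    refine ((Ts i).fvar_subst1_subset x c).trans ?_
    simp only [Term.fvar, NV.vars, Set.empty_union]
    exact Set.sdiff_subset_sdiff_left (Set.subset_iUnion (fun i => (Ts i).fvar) i)
  | out i _ =>
    exact (Set.subset_iUnion_of_subset i Set.subset_union_right).trans Set.subset_union_right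
  | parR _ ih => exact Set.union_subset_union_right _ ih
  | parL _ ih => exact Set.union_subset_union_left _ ih
  | commL _ _ ih₁ ih₂ | commR _ _ ih₁ ih₂ | closeL _ _ ih₁ ih₂ | closeR _ _ ih₁ ih₂ =>
    exact Set.union_subset_union ih₁ ih₂
  | open_ _ ih | resStep _ _ ih => exact ih
  | matStep _ ih | misStep _ _ ih => exact ih.trans Set.subset_union_right
  | repOutStep => exact Set.union_subset Set.subset_union_right subset_rfl
  | @repInpStep a x T b =>
    exact Set.union_subset ((T.fvar_subst1_subset x b).trans Set.subset_union_right) subset_rfl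

lemma Step.isProc {T T' : Term} {μ : Act} (h : Step T μ T') (hT : IsProc T) : IsProc T' :=
  Set.subset_empty_iff.mp (hT ▸ h.fvar_subset)

lemma TauSeq.isProc {f : ℕ → Term} (hf : TauSeq f) (h0 : IsProc (f 0)) (n : ℕ) : IsProc (f n) := by
  induction n with
  | zero => exact h0
  | succ n ih => exact Step.isProc (hf n) ih

lemma IsProc.par {S T : Term} (hS : IsProc S) (hT : IsProc T) : IsProc (.par S T) := by
  simp only [IsProc, Closed, Term.fvar] at *
  simp [hS, hT]

lemma IsProc.res {T : Term} (c : Name) (hT : IsProc T) : IsProc (.res c T) := hT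

lemma WeakTau.par {S S' T T' : Term} (hS : WeakTau S S') (hT : WeakTau T T') :
    WeakTau (.par S T) (.par S' T') :=
  (ReflTransGen.lift (Term.par · T) (fun _ _ h => Step.parL h) _ _ hS).trans
    (ReflTransGen.lift (Term.par S' ·) (fun _ _ h => Step.parR h) _ _ hT)

lemma WeakTau.res (c : Name) {T T' : Term} (h : WeakTau T T') :
    WeakTau (.res c T) (.res c T') :=
  ReflTransGen.lift (Term.res c) (fun _ _ h => Step.resStep h (by simp [Act.names])) _ _ h

lemma Obs.of_weakTau {X Y : Term} (h : WeakTau X Y) (hY : Obs Y) : Obs X := by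
  obtain ⟨Y', ℓ, Y'', hw, hs⟩ := hY
  exact ⟨Y', ℓ, Y'', h.trans hw, hs⟩

lemma tauWeak_iff_transGen {X Y : Term} : TauWeak X Y ↔ TransGen Tau X Y :=
  TransGen.head'_iff.symm

lemma WeakTau.trans_tauWeak {X Y Z : Term} (h₁ : WeakTau X Y) (h₂ : TauWeak Y Z) : TauWeak X Z :=
  tauWeak_iff_transGen.2 (TransGen.trans_right h₁ (tauWeak_iff_transGen.1 h₂))

lemma Relation.exists_seq_of_forall_transGen {α : Type*} {r : α → α → Prop} {D : Set α}
    (hD : ∀ y ∈ D, ∃ z ∈ D, TransGen r y z) {x : α} (hx : ∃ z ∈ D, TransGen r x z) :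
    ∃ f : ℕ → α, f 0 = x ∧ (∀ n, r (f n) (f (n + 1))) ∧ ∀ n, ∃ z ∈ D, TransGen r (f n) z := by
  set E := {y | ∃ z ∈ D, TransGen r y z}
  have hE : ∀ y ∈ E, ∃ y' ∈ E, r y y' := by
    rintro y ⟨z, hz, hyz⟩
    obtain ⟨y', hyy', hy'z⟩ := TransGen.head'_iff.mp hyz
    refine ⟨y', ?_, hyy'⟩
    rcases hy'z.cases_head with rfl | ⟨w, hy'w, hwz⟩
    · exact hD y' hz
    · exact ⟨z, hz, TransGen.head' hy'w hwz⟩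
  choose next hnextE hnext using hE
  let s : ℕ → E := fun n => Nat.rec ⟨x, hx⟩ (fun _ y => ⟨next y y.2, hnextE y y.2⟩) n
  exact ⟨fun n => (s n).1, rfl, fun n => hnext _ (s n).2, fun n => (s n).2⟩

lemma bisim_of_forall_le {R' : PRel} (h : ∀ P Q, R' P Q → ∃ R, Bisim R ∧ R ≤ R' ∧ R P Q) :
    Bisim R' := by
  intro P Q hPQ
  obtain ⟨R, hR, hle, hRPQ⟩ := h P Q hPQ
  obtain ⟨hQ, hP⟩ := hR P Q hRPQ
  refine ⟨fun Q' hQQ' => (hQ Q' hQQ').imp ?_ ?_, fun P' hPP' => (hP P' hPP').imp ?_ ?_⟩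
  · exact fun ⟨P', hw, h₁, h₂⟩ => ⟨P', hw, hle _ _ h₁, hle _ _ h₂⟩
  · exact fun ⟨P'', P', hw, h₁, ht, h₂⟩ => ⟨P'', P', hw, hle _ _ h₁, ht, hle _ _ h₂⟩
  · exact fun ⟨Q', hw, h₁, h₂⟩ => ⟨Q', hw, hle _ _ h₁, hle _ _ h₂⟩
  · exact fun ⟨Q'', Q', hw, h₁, ht, h₂⟩ => ⟨Q'', Q', hw, hle _ _ h₁, ht, hle _ _ h₂⟩

lemma codivergent_of_forall_le {R' : PRel}
    (h : ∀ P Q, R' P Q → ∃ R, Codivergent R ∧ R ≤ R' ∧ R P Q) : Codivergent R' := by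
  intro P Q hPQ
  obtain ⟨R, hR, hle, hRPQ⟩ := h P Q hPQ
  obtain ⟨hQ, hP⟩ := hR P Q hRPQ
  refine ⟨fun f hf0 hf => ?_, fun f hf0 hf => ?_⟩
  · obtain ⟨k, hk, P', hw, h'⟩ := hQ f hf0 hf
    exact ⟨k, hk, P', hw, hle _ _ h'⟩
  · obtain ⟨k, hk, Q', hw, h'⟩ := hP f hf0 hf
    exact ⟨k, hk, Q', hw, hle _ _ h'⟩

lemma bisim_of_symm {R : PRel} [Std.Symm R]
    (h : ∀ P Q, R P Q → ∀ Q', Tau Q Q' →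
      (∃ P', WeakTau P P' ∧ R P' Q ∧ R P' Q') ∨
      (∃ P'' P', WeakTau P P'' ∧ R P'' Q ∧ Tau P'' P' ∧ R P' Q')) :
    Bisim R := by
  refine fun P Q hPQ => ⟨h P Q hPQ, fun P' hPP' => (h Q P (symm hPQ) P' hPP').imp ?_ ?_⟩
  · exact fun ⟨Q', hw, h₁, h₂⟩ => ⟨Q', hw, symm h₁, symm h₂⟩
  · exact fun ⟨Q'', Q', hw, h₁, ht, h₂⟩ => ⟨Q'', Q', hw, symm h₁, ht, symm h₂⟩

lemma codivergent_of_symm {R : PRel} [Std.Symm R]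
    (h : ∀ P Q, R P Q → ∀ f : ℕ → Term, f 0 = Q → TauSeq f →
      ∃ k, 1 ≤ k ∧ ∃ P', TauWeak P P' ∧ R P' (f k)) :
    Codivergent R :=
  fun P Q hPQ => ⟨h P Q hPQ, h Q P (symm hPQ)⟩

def XRel (R : PRel) : PRel := fun A B =>
  (∃ A', WeakTau A A' ∧ R A' B) ∧ (∃ B', WeakTau B B' ∧ R B' A)

instance {R : PRel} : Std.Symm (XRel R) := ⟨fun _ _ h => ⟨h.2, h.1⟩⟩

lemma GoodAbs.xRel {R : PRel} [Std.Symm R] (hR : GoodAbs R) : GoodAbs (XRel R) := by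
  obtain ⟨hOn, hRefl, hEq, ⟨hPar, hRes⟩, hCod, hBis⟩ := hR
  have hle : ∀ {P Q}, R P Q → XRel R P Q := fun h => ⟨⟨_, .refl, h⟩, ⟨_, .refl, symm h⟩⟩
  refine ⟨?_, fun P hP => hle (hRefl P hP), ?_, ⟨?_, ?_⟩,
    codivergent_of_symm ?_, bisim_of_symm ?_⟩
  · rintro P Q ⟨⟨P', -, hP'Q⟩, ⟨Q', -, hQ'P⟩⟩
    exact ⟨(hOn _ _ hQ'P).2, (hOn _ _ hP'Q).2⟩
  · rintro P Q ⟨⟨P', hPP', hP'Q⟩, ⟨Q', hQQ', hQ'P⟩⟩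
    exact ⟨fun h => ((hEq _ _ hQ'P).2 h).of_weakTau hQQ',
      fun h => ((hEq _ _ hP'Q).2 h).of_weakTau hPP'⟩
  · rintro L M P Q ⟨⟨L', hLL', hL'M⟩, ⟨M', hMM', hM'L⟩⟩ ⟨⟨P', hPP', hP'Q⟩, ⟨Q', hQQ', hQ'P⟩⟩
    exact ⟨⟨_, hLL'.par hPP', hPar _ _ _ _ hL'M hP'Q⟩, ⟨_, hMM'.par hQQ', hPar _ _ _ _ hM'L hQ'P⟩⟩
  · rintro P Q c ⟨⟨P', hPP', hP'Q⟩, ⟨Q', hQQ', hQ'P⟩⟩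
    exact ⟨⟨_, hPP'.res c, hRes _ _ c hP'Q⟩, ⟨_, hQQ'.res c, hRes _ _ c hQ'P⟩⟩
  · rintro P Q ⟨⟨P', hPP', hP'Q⟩, -⟩ f hf0 hf
    obtain ⟨k, hk, P₁, hP'P₁, hP₁⟩ := (hCod _ _ hP'Q).1 f hf0 hf
    exact ⟨k, hk, P₁, hPP'.trans_tauWeak hP'P₁, hle hP₁⟩
  · rintro P Q ⟨⟨P', hPP', hP'Q⟩, -⟩ Q' hQQ'
    refine ((hBis _ _ hP'Q).1 Q' hQQ').imp ?_ ?_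
    · exact fun ⟨P₁, hw, h₁, h₂⟩ => ⟨P₁, hPP'.trans hw, hle h₁, hle h₂⟩
    · exact fun ⟨P₂, P₁, hw, h₁, ht, h₂⟩ => ⟨P₂, P₁, hPP'.trans hw, hle h₁, ht, hle h₂⟩

lemma GoodAbs.le_absEq {R : PRel} (hR : GoodAbs R) : R ≤ AbsEq :=
  fun _ _ h => ⟨R, hR, h⟩

lemma AbsEq.isProc {X Y : Term} (h : AbsEq X Y) : IsProc X ∧ IsProc Y :=
  let ⟨_, hR, hXY⟩ := h; hR.1 _ _ hXY

lemma AbsEq.obs_iff {X Y : Term} (h : AbsEq X Y) : Obs X ↔ Obs Y :=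
  let ⟨_, hR, hXY⟩ := h; hR.2.2.1 _ _ hXY

lemma AbsEq.par_right {X Y P : Term} (h : AbsEq X Y) (hP : IsProc P) :
    AbsEq (.par X P) (.par Y P) :=
  let ⟨R, hR, hXY⟩ := h; ⟨R, hR, hR.2.2.2.1.1 _ _ _ _ hXY (hR.2.1 P hP)⟩

lemma AbsEq.par_left {X Y M : Term} (h : AbsEq X Y) (hM : IsProc M) :
    AbsEq (.par M X) (.par M Y) :=
  let ⟨R, hR, hXY⟩ := h; ⟨R, hR, hR.2.2.2.1.1 _ _ _ _ (hR.2.1 M hM) hXY⟩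

lemma AbsEq.res {X Y : Term} (c : Name) (h : AbsEq X Y) : AbsEq (.res c X) (.res c Y) :=
  let ⟨R, hR, hXY⟩ := h; ⟨R, hR, hR.2.2.2.1.2 _ _ c hXY⟩

lemma bisim_absEq : Bisim AbsEq :=
  bisim_of_forall_le fun _ _ ⟨R, hR, h⟩ => ⟨R, hR.2.2.2.2.2, hR.le_absEq, h⟩

lemma codivergent_absEq : Codivergent AbsEq :=
  codivergent_of_forall_le fun _ _ ⟨R, hR, h⟩ => ⟨R, hR.2.2.2.2.1, hR.le_absEq, h⟩

def AbsLink : PRel := fun X Y => AbsEq X Y ∨ AbsEq Y X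

instance : Std.Symm AbsLink := ⟨fun _ _ h => Or.symm h⟩

namespace AbsLink

variable {X Y : Term}

lemma isProc (h : AbsLink X Y) : IsProc X ∧ IsProc Y :=
  h.elim AbsEq.isProc fun h => h.isProc.symm

lemma obs_iff (h : AbsLink X Y) : Obs X ↔ Obs Y :=
  h.elim AbsEq.obs_iff fun h => h.obs_iff.symm

lemma par_right (h : AbsLink X Y) {P : Term} (hP : IsProc P) :
    AbsLink (.par X P) (.par Y P) :=
  h.imp (·.par_right hP) (·.par_right hP)

lemma par_left (h : AbsLink X Y) {M : Term} (hM : IsProc M) :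
    AbsLink (.par M X) (.par M Y) :=
  h.imp (·.par_left hM) (·.par_left hM)

lemma res (c : Name) (h : AbsLink X Y) : AbsLink (.res c X) (.res c Y) :=
  h.imp (·.res c) (·.res c)

lemma bisim (h : AbsLink X Y) {Y' : Term} (hY : Tau Y Y') :
    (∃ X₁, WeakTau X X₁ ∧ AbsLink X₁ Y ∧ AbsLink X₁ Y') ∨
    (∃ X₂ X₁, WeakTau X X₂ ∧ AbsLink X₂ Y ∧ Tau X₂ X₁ ∧ AbsLink X₁ Y') := by
  rcases h with h | h
  · refine ((bisim_absEq X Y h).1 Y' hY).imp ?_ ?_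
    · exact fun ⟨X₁, hw, h₁, h₂⟩ => ⟨X₁, hw, .inl h₁, .inl h₂⟩
    · exact fun ⟨X₂, X₁, hw, h₁, ht, h₂⟩ => ⟨X₂, X₁, hw, .inl h₁, ht, .inl h₂⟩
  · refine ((bisim_absEq Y X h).2 Y' hY).imp ?_ ?_
    · exact fun ⟨X₁, hw, h₁, h₂⟩ => ⟨X₁, hw, .inr h₁, .inr h₂⟩
    · exact fun ⟨X₂, X₁, hw, h₁, ht, h₂⟩ => ⟨X₂, X₁, hw, .inr h₁, ht, .inr h₂⟩

lemma exists_weakTau {Y' : Term} (hY : WeakTau Y Y') (h : AbsLink X Y) :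
    ∃ X', WeakTau X X' ∧ AbsLink X' Y' := by
  induction hY using ReflTransGen.head_induction_on generalizing X with
  | refl => exact ⟨X, .refl, h⟩
  | head hY₀ _ ih =>
    rcases h.bisim hY₀ with ⟨X₁, hw, -, h₁⟩ | ⟨X₂, X₁, hw, -, ht, h₁⟩
    · obtain ⟨X', hw', h'⟩ := ih h₁
      exact ⟨X', hw.trans hw', h'⟩
    · obtain ⟨X', hw', h'⟩ := ih h₁
      exact ⟨X', (hw.tail ht).trans hw', h'⟩

lemma codiv (h : AbsLink X Y) {f : ℕ → Term} (hf0 : f 0 = Y) (hf : TauSeq f) :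
    ∃ k, 1 ≤ k ∧ ∃ X', TauWeak X X' ∧ AbsLink X' (f k) := by
  rcases h with h | h
  · obtain ⟨k, hk, X', hw, h'⟩ := (codivergent_absEq X Y h).1 f hf0 hf
    exact ⟨k, hk, X', hw, .inl h'⟩
  · obtain ⟨k, hk, X', hw, h'⟩ := (codivergent_absEq Y X h).2 f hf0 hf
    exact ⟨k, hk, X', hw, .inl h'⟩

end AbsLink

def AbsChain : PRel := fun X Y => IsProc X ∧ ReflTransGen AbsLink X Y

namespace AbsChain

lemma refl {X : Term} (hX : IsProc X) : AbsChain X X := ⟨hX, .refl⟩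

lemma isProc {X Y : Term} (h : AbsChain X Y) : IsProc X ∧ IsProc Y := by
  refine ⟨h.1, ?_⟩
  induction h.2 with
  | refl => exact h.1
  | tail _ hl _ => exact hl.isProc.2

instance : Std.Symm AbsChain :=
  ⟨fun _ _ h => ⟨h.isProc.2, symm h.2⟩⟩

lemma _root_.AbsLink.trans_absChain {X Y Z : Term} (hXY : AbsLink X Y) (hYZ : AbsChain Y Z) :
    AbsChain X Z :=
  ⟨hXY.isProc.1, .head hXY hYZ.2⟩

lemma _root_.AbsEq.absChain {X Y : Term} (h : AbsEq X Y) : AbsChain X Y :=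
  ⟨h.isProc.1, .single (.inl h)⟩

end AbsChain

namespace AbsChain

lemma obs_iff {X Y : Term} (h : AbsChain X Y) : Obs X ↔ Obs Y := by
  obtain ⟨-, h⟩ := h
  induction h with
  | refl => rfl
  | tail _ hl ih => exact ih.trans hl.obs_iff

lemma par {L M P Q : Term} (hLM : AbsChain L M) (hPQ : AbsChain P Q) :
    AbsChain (.par L P) (.par M Q) :=
  ⟨hLM.1.par hPQ.1,
    (ReflTransGen.lift (Term.par · P) (fun _ _ h => h.par_right hPQ.1) _ _ hLM.2).trans
      (ReflTransGen.lift (Term.par M ·) (fun _ _ h => h.par_left hLM.isProc.2) _ _ hPQ.2)⟩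

lemma res (c : Name) {P Q : Term} (h : AbsChain P Q) : AbsChain (.res c P) (.res c Q) :=
  ⟨h.1.res c, ReflTransGen.lift (Term.res c) (fun _ _ h => h.res c) _ _ h.2⟩

lemma bisim {A C : Term} (h : AbsChain A C) {C' : Term} (hC : Tau C C') :
    (∃ A₁, WeakTau A A₁ ∧ AbsChain A₁ C ∧ AbsChain A₁ C') ∨
    (∃ A₂ A₁, WeakTau A A₂ ∧ AbsChain A₂ C ∧ Tau A₂ A₁ ∧ AbsChain A₁ C') := by
  obtain ⟨hA, hAC⟩ := h
  induction hAC using ReflTransGen.head_induction_on with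
  | refl => exact .inr ⟨C, C', .refl, refl hA, hC, refl (Step.isProc hC hA)⟩
  | head hAB _ ih =>
    rcases ih hAB.isProc.2 with ⟨B₁, hw, h₁, h₂⟩ | ⟨B₂, B₁, hw, h₁, ht, h₂⟩
    · obtain ⟨A₁, hwA, hl⟩ := hAB.exists_weakTau hw
      exact .inl ⟨A₁, hwA, hl.trans_absChain h₁, hl.trans_absChain h₂⟩
    · obtain ⟨A₂, hwA, hl⟩ := hAB.exists_weakTau hw
      rcases hl.bisim ht with ⟨A₁, hw', h₁', h₂'⟩ | ⟨A₃, A₁, hw', h₁', ht', h₂'⟩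
      · exact .inl ⟨A₁, hwA.trans hw', h₁'.trans_absChain h₁, h₂'.trans_absChain h₂⟩
      · exact .inr ⟨A₃, A₁, hwA.trans hw', h₁'.trans_absChain h₁, ht', h₂'.trans_absChain h₂⟩

/-- The last clause, which keeps every state of `g` within reach of the tail of `f`, is what lets
the statement pass through one more link of the chain. -/
lemma exists_tauSeq {A C : Term} (h : AbsChain A C) {f : ℕ → Term} (hf0 : f 0 = C)
    (hf : TauSeq f) :
    ∃ g : ℕ → Term, g 0 = A ∧ TauSeq g ∧
      ∀ n, ∃ k, 1 ≤ k ∧ ∃ e, WeakTau (g n) e ∧ AbsChain e (f k) := by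
  obtain ⟨hA, hAC⟩ := h
  induction hAC using ReflTransGen.head_induction_on with
  | refl =>
    refine ⟨f, hf0, hf, fun n => ⟨n + 1, by omega, f (n + 1), .single (hf n), refl ?_⟩⟩
    exact hf.isProc (hf0 ▸ hA) (n + 1)
  | @head A B hAB _ ih =>
    obtain ⟨g', hg'0, hg', hg'_tail⟩ := ih hAB.isProc.2
    have hD : ∀ X ∈ {X | ∃ n, AbsLink X (g' n)}, ∃ X' ∈ {X | ∃ n, AbsLink X (g' n)},
        TransGen Tau X X' := by
      rintro X ⟨n, hX⟩
      obtain ⟨k, -, X', hXX', hX'⟩ := hX.codiv (f := fun m => g' (n + m)) rfl fun m => hg' (n + m)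
      exact ⟨X', ⟨n + k, hX'⟩, tauWeak_iff_transGen.1 hXX'⟩
    obtain ⟨g, hg0, hg, hgD⟩ := exists_seq_of_forall_transGen hD (hD A ⟨0, hg'0 ▸ hAB⟩)
    refine ⟨g, hg0, hg, fun t => ?_⟩
    obtain ⟨z, ⟨n, hz⟩, hgz⟩ := hgD t
    obtain ⟨k, hk, e, he, hef⟩ := hg'_tail n
    obtain ⟨e', hze', he'e⟩ := hz.exists_weakTau he
    exact ⟨k, hk, e', hgz.to_reflTransGen.trans hze', he'e.trans_absChain hef⟩

end AbsChain

lemma goodAbs_absChain : GoodAbs AbsChain := by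
  refine ⟨fun _ _ h => h.isProc, fun _ => AbsChain.refl, fun _ _ h => h.obs_iff,
    ⟨fun _ _ _ _ => AbsChain.par, fun _ _ c => AbsChain.res c⟩, ?_,
    bisim_of_symm fun _ _ h _ hQ => h.bisim hQ⟩
  refine codivergent_of_symm fun P Q h f hf0 hf => ?_
  obtain ⟨g, hg0, hg, hg_tail⟩ := h.exists_tauSeq hf0 hf
  obtain ⟨k, hk, e, he, hef⟩ := hg_tail 1
  exact ⟨k, hk, e, ⟨g 1, hg0 ▸ hg 0, he⟩, hef⟩

theorem bisimulation_lemma_general (P Q : Term)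
    (h1 : ∃ P', WeakTau P P' ∧ AbsEq P' Q)
    (h2 : ∃ Q', WeakTau Q Q' ∧ AbsEq Q' P) :
    AbsEq P Q := by
  obtain ⟨P', hPP', hP'Q⟩ := h1
  obtain ⟨Q', hQQ', hQ'P⟩ := h2
  exact ⟨XRel AbsChain, goodAbs_absChain.xRel, ⟨P', hPP', hP'Q.absChain⟩, ⟨Q', hQQ', hQ'P.absChain⟩⟩

/-- the Bisimulation Lemma (X-property) for the absolute equality. -/
theorem bisimulation_lemma (P Q : Term) (hP : IsProc P) (hQ : IsProc Q)
    (h1 : ∃ P', WeakTau P P' ∧ AbsEq P' Q)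
    (h2 : ∃ Q', WeakTau Q Q' ∧ AbsEq Q' P) :
    AbsEq P Q :=
  bisimulation_lemma_general P Q h1 h2
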